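/- arXiv:math/0502300 — 2 statements merged into one kernel-verified Lean document; each statement's English description precedes it below -/
import Mathlib

section
/- Fix $0 < r < 1$, $\Lambda > 0$, $\tau > 0$, and suppose that for each $k \ge 1$ the functions $f_n^{(k)}$ satisfy: $|f_n^{(1)}(z)| \le \frac{\Lambda r}{\tau^2} \frac{r^n}{||z|-r|}$ for $|z| \neq r$, and the iterative bounds $\|f_n^{(2k+1)}\|$ is bounded by applying operators with norms $\frac{\Lambda r}{\tau^2} r^n \frac{1}{||z|-r|}$ and $\frac{\Lambda \tau^2}{r} r^n \frac{1}{||z|-1/r|}$ alternately. Then for all $k \in \mathbb{N}$: if $k$ is odd and $|z| \neq r$, $|f_n^{(k)}(z)| \le \frac{r}{\tau^2} \frac{\Lambda^k r^{kn}}{(1/r - r)^{k-1}} \frac{1}{||z|-r|}$; if $k$ is even and $|z| \neq 1/r$, $|f_n^{(k)}(z)| \le \frac{\Lambda^k r^{kn}}{(1/r - r)^{k-1}} \frac{1}{||z|-1/r|}$. -/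
open Complex Real

/-- The operator `𝓜ₙⁱ` (Cauchy transform over the circle of radius `r`). -/
noncomputable def Mi (r τ : ℝ) (F : ℂ → ℂ) (n : ℕ) (f : ℂ → ℂ) : ℂ → ℂ :=
  fun z => -(1 / (2 * (π:ℂ) * Complex.I * (τ:ℂ)^2)) *
    ∮ t in C(0, r), f t * (F t * t ^ n) / (t - z)

/-- The operator `𝓜ₙᵉ` (Cauchy transform over the circle of radius `1/r`). -/
noncomputable def Me (r τ : ℝ) (F : ℂ → ℂ) (n : ℕ) (f : ℂ → ℂ) : ℂ → ℂ :=
  fun z => ((τ:ℂ)^2 / (2 * (π:ℂ) * Complex.I)) *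
    ∮ t in C(0, 1/r), f t * (1 / (F t * t ^ n * (t - z)))

/-- The iterated Cauchy transforms `fₙ⁽ᵏ⁾`: `fₙ⁽⁰⁾ = 1`,
`fₙ⁽²ᵏ⁺¹⁾ = 𝓜ₙⁱ fₙ⁽²ᵏ⁾`, `fₙ⁽²ᵏ⁺²⁾ = 𝓜ₙᵉ fₙ⁽²ᵏ⁺¹⁾`. -/
noncomputable def fIter (r τ : ℝ) (F : ℂ → ℂ) (n : ℕ) : ℕ → ℂ → ℂ
  | 0 => fun _ => 1
  | k + 1 =>
    if Even k then Mi r τ F n (fIter r τ F n k) else Me r τ F n (fIter r τ F n k)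

lemma dist_lower (z t : ℂ) : |‖t‖ - ‖z‖| ≤ ‖t - z‖ :=
  abs_norm_sub_norm_le t z

lemma Mi_bound (r τ Λ B : ℝ) (hr0 : 0 < r) (hτ : 0 < τ) (hB : 0 ≤ B) (hΛ : 0 ≤ Λ)
    (F g : ℂ → ℂ) (n : ℕ)
    (hΛi : ∀ t : ℂ, ‖t‖ = r → ‖F t‖ ≤ Λ)
    (hg : ∀ t : ℂ, ‖t‖ = r → ‖g t‖ ≤ B)
    (z : ℂ) (hz : ‖z‖ ≠ r) :
    ‖Mi r τ F n g z‖ ≤ (r / τ^2) * (B * Λ * r^n) * (1 / |‖z‖ - r|) := by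
  set d := |‖z‖ - r| with hd
  have hd0 : 0 < d := abs_pos.2 (sub_ne_zero.2 hz)
  have key : ∀ t ∈ Metric.sphere (0:ℂ) r, ‖g t * (F t * t ^ n) / (t - z)‖ ≤ B * Λ * r^n / d := by
    intro t ht
    have htr : ‖t‖ = r := by
      simpa using mem_sphere_zero_iff_norm.1 ht
    have h1 : d ≤ ‖t - z‖ := by
      calc d = |‖t‖ - ‖z‖| := by rw [htr, abs_sub_comm]
        _ ≤ ‖t - z‖ := dist_lower z t
    have heq : ‖g t * (F t * t ^ n) / (t - z)‖
        = ‖g t‖ * (‖F t‖ * r ^ n) / ‖t - z‖ := by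
      simp [norm_div, norm_mul, norm_pow, htr]
    rw [heq]
    apply div_le_div₀ (by positivity) ?_ hd0 h1
    calc ‖g t‖ * (‖F t‖ * r ^ n)
        ≤ B * (Λ * r ^ n) := mul_le_mul (hg t htr)
          (mul_le_mul_of_nonneg_right (hΛi t htr) (by positivity)) (by positivity) hB
      _ = B * Λ * r ^ n := by ring
  have hInt := circleIntegral.norm_integral_le_of_norm_le_const hr0.le key
  have habs : ‖-(1 / (2 * (π:ℂ) * Complex.I * (τ:ℂ)^2))‖ = 1 / (2 * π * τ^2) := by
    simp [norm_div, norm_mul, Complex.norm_I, Complex.norm_real,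
      abs_of_pos Real.pi_pos, abs_of_pos hτ, norm_pow]
  have : ‖Mi r τ F n g z‖
      ≤ (1 / (2 * π * τ^2)) * (2 * π * r * (B * Λ * r^n / d)) := by
    rw [show Mi r τ F n g z = -(1 / (2 * (π:ℂ) * Complex.I * (τ:ℂ)^2)) * ∮ t in C(0, r), g t * (F t * t ^ n) / (t - z) from rfl, norm_mul, habs]
    exact mul_le_mul_of_nonneg_left hInt (by positivity)
  refine this.trans (le_of_eq ?_)
  have hπ : (π:ℝ) ≠ 0 := Real.pi_ne_zero
  field_simp

lemma Me_bound (r τ Λ B : ℝ) (hr0 : 0 < r) (hτ : 0 < τ) (hB : 0 ≤ B) (hΛ : 0 ≤ Λ)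
    (F g : ℂ → ℂ) (n : ℕ)
    (hΛe : ∀ t : ℂ, ‖t‖ = 1/r → ‖(F t)⁻¹‖ ≤ Λ)
    (hg : ∀ t : ℂ, ‖t‖ = 1/r → ‖g t‖ ≤ B)
    (z : ℂ) (hz : ‖z‖ ≠ 1/r) :
    ‖Me r τ F n g z‖ ≤ (τ^2 / r) * (B * Λ * r^n) * (1 / |‖z‖ - 1/r|) := by
  set d := |‖z‖ - 1/r| with hd
  have hd0 : 0 < d := abs_pos.2 (sub_ne_zero.2 hz)
  have key : ∀ t ∈ Metric.sphere (0:ℂ) (1/r), ‖g t * (1 / (F t * t ^ n * (t - z)))‖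
      ≤ B * Λ * r^n / d := by
    intro t ht
    have htr : ‖t‖ = 1/r := by
      simpa using mem_sphere_zero_iff_norm.1 ht
    have h1 : d ≤ ‖t - z‖ := by
      calc d = |‖t‖ - ‖z‖| := by rw [htr, abs_sub_comm]
        _ ≤ ‖t - z‖ := dist_lower z t
    have heq : ‖g t * (1 / (F t * t ^ n * (t - z)))‖
        = ‖g t‖ * ((‖F t‖)⁻¹ * ((1/r) ^ n)⁻¹ * (‖t - z‖)⁻¹) := by
      simp only [norm_mul, norm_one, one_div, norm_inv, norm_pow, htr, mul_inv]
    have hpow : ((1/r : ℝ) ^ n)⁻¹ = r ^ n := by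
      rw [one_div, ← inv_pow, inv_inv]
    rw [heq, hpow]
    have h2 : (‖t - z‖)⁻¹ ≤ d⁻¹ := by
      exact inv_anti₀ hd0 h1
    have h3 : (‖F t‖)⁻¹ ≤ Λ := by
      have := hΛe t htr; rwa [norm_inv] at this
    calc ‖g t‖ * ((‖F t‖)⁻¹ * r ^ n * (‖t - z‖)⁻¹)
        ≤ B * (Λ * r ^ n * d⁻¹) := by
          apply mul_le_mul (hg t htr) ?_ (by positivity) hB
          apply mul_le_mul ?_ h2 (by positivity) (by positivity)
          exact mul_le_mul_of_nonneg_right h3 (by positivity)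
      _ = B * Λ * r^n / d := by rw [div_eq_mul_inv]; ring
  have hInt := circleIntegral.norm_integral_le_of_norm_le_const (by positivity : (0:ℝ) ≤ 1/r) key
  have habs : ‖(τ:ℂ)^2 / (2 * (π:ℂ) * Complex.I)‖ = τ^2 / (2 * π) := by
    simp [norm_div, norm_mul, Complex.norm_I, Complex.norm_real,
      abs_of_pos Real.pi_pos, abs_of_pos hτ, norm_pow]
  have : ‖Me r τ F n g z‖
      ≤ (τ^2 / (2 * π)) * (2 * π * (1/r) * (B * Λ * r^n / d)) := by
    rw [show Me r τ F n g z = ((τ:ℂ)^2 / (2 * (π:ℂ) * Complex.I)) * ∮ t in C(0, 1/r), g t * (1 / (F t * t ^ n * (t - z))) from rfl, norm_mul, habs]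
    exact mul_le_mul_of_nonneg_left hInt (by positivity)
  refine this.trans (le_of_eq ?_)
  have hπ : (π:ℝ) ≠ 0 := Real.pi_ne_zero
  field_simp

lemma fIter_succ (r τ : ℝ) (F : ℂ → ℂ) (n k : ℕ) :
    fIter r τ F n (k+1) =
      if Even k then Mi r τ F n (fIter r τ F n k) else Me r τ F n (fIter r τ F n k) := rfl

/-- Estimates for the iterated Cauchy transforms `fₙ⁽ᵏ⁾`. -/
theorem fIter_bounds
    (r τ Λ : ℝ) (hr0 : 0 < r) (hr1 : r < 1) (hτ : 0 < τ)
    (F : ℂ → ℂ)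
    (hF : ∃ U : Set ℂ, IsOpen U ∧
      {z : ℂ | r ≤ ‖z‖ ∧ ‖z‖ ≤ 1/r} ⊆ U ∧
      DifferentiableOn ℂ F U ∧ ∀ z ∈ U, F z ≠ 0)
    (hΛi : ∀ t : ℂ, ‖t‖ = r → ‖F t‖ ≤ Λ)
    (hΛe : ∀ t : ℂ, ‖t‖ = 1/r → ‖(F t)⁻¹‖ ≤ Λ)
    (n : ℕ) :
    ∀ k : ℕ, 1 ≤ k → ∀ z : ℂ,
      (Odd k → ‖z‖ ≠ r →
        ‖fIter r τ F n k z‖ ≤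
          (r / τ^2) * (Λ^k * r^(k*n) / (1/r - r)^(k-1)) * (1 / |‖z‖ - r|)) ∧
      (Even k → ‖z‖ ≠ 1/r →
        ‖fIter r τ F n k z‖ ≤
          Λ^k * r^(k*n) / (1/r - r)^(k-1) * (1 / |‖z‖ - 1/r|)) := by
  have hΛ : 0 ≤ Λ := by
    have habsr : ‖(r:ℂ)‖ = r := by
      simpa using abs_of_pos hr0
    exact le_trans (norm_nonneg _) (hΛi r habsr)
  have hrr : r < 1/r := lt_trans hr1 (one_lt_one_div hr0 hr1)
  have hD : 0 < 1/r - r := sub_pos.2 hrr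
  have hD' : 1/r - r ≠ 0 := ne_of_gt hD
  have hne : (1/r : ℝ) ≠ r := ne_of_gt hrr
  have habs1 : |(1/r : ℝ) - r| = 1/r - r := abs_of_pos hD
  have habs2 : |r - (1/r : ℝ)| = 1/r - r := by rw [abs_sub_comm]; exact habs1
  intro k hk
  induction k, hk using Nat.le_induction with
  | base =>
    intro z
    constructor
    · intro _ hz
      have h0 : fIter r τ F n 1 = Mi r τ F n (fun _ => 1) := by
        rw [fIter_succ, if_pos (Even.zero)]; rfl
      rw [h0]
      have := Mi_bound r τ Λ 1 hr0 hτ zero_le_one hΛ F (fun _ => 1) n hΛi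
        (fun t _ => by simp) z hz
      convert this using 2
      simp
    · intro h
      exact absurd h (by simp [Nat.even_iff])
  | succ k hk ih =>
    obtain ⟨m, rfl⟩ : ∃ m, k = m + 1 := ⟨k - 1, (Nat.succ_pred_eq_of_pos hk).symm⟩
    intro z
    rcases Nat.even_or_odd m with hm | hm
    · -- m even, k = m+1 odd, k+1 even : Me step
      have hodd : Odd (m+1) := Even.add_one hm
      have hstep : fIter r τ F n (m+1+1) = Me r τ F n (fIter r τ F n (m+1)) := by
        rw [fIter_succ, if_neg (by simpa [Nat.even_add_one] using hm)]
      constructor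
      · intro h _
        rw [Nat.odd_iff, Nat.even_iff] at *
        omega
      · intro _ hz
        set B := (r / τ^2) * (Λ^(m+1) * r^((m+1)*n) / (1/r - r)^m) * (1/(1/r - r)) with hBdef
        have hB0 : 0 ≤ B := by positivity
        have hg : ∀ t : ℂ, ‖t‖ = 1/r → ‖fIter r τ F n (m+1) t‖ ≤ B := by
          intro t ht
          have h := (ih t).1 hodd (by rw [ht]; exact hne)
          rw [ht, habs1, Nat.add_sub_cancel] at h
          exact h
        have hmain := Me_bound r τ Λ B hr0 hτ hB0 hΛ F (fIter r τ F n (m+1)) n hΛe hg z hz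
        rw [hstep]
        refine le_trans hmain (le_of_eq ?_)
        rw [Nat.add_sub_cancel, hBdef]
        congr 1
        rw [pow_succ Λ (m+1), show (m+1+1)*n = (m+1)*n + n from by ring, pow_add,
          pow_succ (1/r - r) m]
        set Dv := 1/r - r with hDv
        clear_value Dv
        have hτ2 : (τ:ℝ)^2 ≠ 0 := by positivity
        field_simp [hD']
        ring_nf
        try exact Or.inl trivial
    · -- m odd, k = m+1 even, k+1 odd : Mi step
      have heven : Even (m+1) := Odd.add_one hm
      have hstep : fIter r τ F n (m+1+1) = Mi r τ F n (fIter r τ F n (m+1)) := by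
        rw [fIter_succ, if_pos heven]
      constructor
      · intro _ hz
        set B := Λ^(m+1) * r^((m+1)*n) / (1/r - r)^m * (1/(1/r - r)) with hBdef
        have hB0 : 0 ≤ B := by positivity
        have hg : ∀ t : ℂ, ‖t‖ = r → ‖fIter r τ F n (m+1) t‖ ≤ B := by
          intro t ht
          have h := (ih t).2 heven (by rw [ht]; exact hne.symm)
          rw [ht, habs2, Nat.add_sub_cancel] at h
          exact h
        have hmain := Mi_bound r τ Λ B hr0 hτ hB0 hΛ F (fIter r τ F n (m+1)) n hΛi hg z hz
        rw [hstep]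
        refine le_trans hmain (le_of_eq ?_)
        rw [Nat.add_sub_cancel, hBdef]
        congr 1
        rw [pow_succ Λ (m+1), show (m+1+1)*n = (m+1)*n + n from by ring, pow_add,
          pow_succ (1/r - r) m]
        set Dv := 1/r - r with hDv
        clear_value Dv
        have hτ2 : (τ:ℝ)^2 ≠ 0 := by positivity
        field_simp [hD']
        ring_nf
        try exact Or.inl trivial
      · intro h
        rw [Nat.odd_iff, Nat.even_iff] at *
        omega
end

section
/- Let $f$ be holomorphic on a punctured neighborhood of $a \in \mathbb{C}$, $0 < |a| < 1$, with a pole of order $m$ at $a$ and Laurent expansion $f(z) = \sum_{j \ge -m} f_j (z-a)^j$, $f_{-m} \neq 0$. Then for $n \ge m$, $\operatorname{res}_{t=a}(f(t)t^n) = \sum_{j=0}^{m-1}\binom{n}{j} a^{n-j} f_{-j-1} = f_{-m} a^{n-m+1}\binom{n}{m-1}(1 + h_n)$, where $h_n = 0$ if $m = 1$, and for $m \ge 2$, $|h_n| \le \frac{C_1}{n}\cdot\frac{\max_{0\le j\le m-2}|f_{-j-1}|}{|f_{-m}|}$ for a constant $C_1$ depending only on $a$ and $m$. -/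
open Complex Real

lemma circleIntegral_finset_sum {ι : Type*} (s : Finset ι) (F : ι → ℂ → ℂ) (c : ℂ) (R : ℝ)
    (h : ∀ i ∈ s, CircleIntegrable (F i) c R) :
    (∮ z in C(c, R), ∑ i ∈ s, F i z) = ∑ i ∈ s, ∮ z in C(c, R), F i z := by
  simp only [circleIntegral, Finset.smul_sum]
  exact intervalIntegral.integral_finset_sum fun i hi => (h i hi).out

lemma circleIntegral_pow_div (a : ℂ) {ε : ℝ} (hε : 0 < ε) {n j : ℕ} (hj : j ≤ n) :
    (∮ t in C(a, ε), t ^ n / (t - a) ^ (j + 1)) =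
      2 * (π : ℂ) * Complex.I * ((n.choose j : ℂ) * a ^ (n - j)) := by
  have hcenter : a ∉ Metric.sphere a ε := by simp [hε.ne]
  have hcenter' : a ∉ Metric.sphere a |ε| := by rwa [abs_of_pos hε]
  have key : Set.EqOn (fun t => t ^ n / (t - a) ^ (j + 1))
      (fun t => ∑ k ∈ Finset.range (n + 1),
        ((n.choose k : ℂ) * a ^ (n - k)) * (t - a) ^ ((k : ℤ) - (j + 1 : ℤ)))
      (Metric.sphere a ε) := by
    intro t ht
    have ht' : t - a ≠ 0 := sub_ne_zero.2 (by intro h; subst h; rw [Metric.mem_sphere, dist_self] at ht; exact hε.ne ht)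
    have hexp : t ^ n = ∑ k ∈ Finset.range (n + 1), (t - a) ^ k * a ^ (n - k) * (n.choose k) := by
      conv_lhs => rw [show t = (t - a) + a by ring]
      exact add_pow _ _ _
    simp only
    rw [hexp, Finset.sum_div]
    refine Finset.sum_congr rfl fun k hk => ?_
    rw [zpow_sub₀ ht', zpow_natCast]
    rw [show ((j : ℤ) + 1) = ((j + 1 : ℕ) : ℤ) by push_cast; ring, zpow_natCast]
    field_simp
  rw [circleIntegral.integral_congr hε.le key]
  rw [circleIntegral_finset_sum _ _ _ _ (fun k _ => ?_)]
  · rw [Finset.sum_eq_single j]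
    · have : (fun t : ℂ => ((n.choose j : ℂ) * a ^ (n - j)) * (t - a) ^ ((j : ℤ) - (j + 1 : ℤ)))
          = fun t : ℂ => ((n.choose j : ℂ) * a ^ (n - j)) * (t - a)⁻¹ := by
        funext t
        norm_num
      rw [this, circleIntegral.integral_const_mul, circleIntegral.integral_sub_center_inv a hε.ne']
      ring
    · intro k _ hkj
      rw [circleIntegral.integral_const_mul,
        circleIntegral.integral_sub_zpow_of_ne (by omega) a a ε, mul_zero]
    · intro hjmem
      exact absurd (Finset.mem_range.2 (by omega)) hjmem
  · exact (circleIntegrable_sub_zpow_iff.mpr (Or.inr (Or.inr hcenter'))).const_mul _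

lemma circleIntegral_add' {f g : ℂ → ℂ} {c : ℂ} {R : ℝ} (hf : CircleIntegrable f c R)
    (hg : CircleIntegrable g c R) :
    (∮ z in C(c, R), (f z + g z)) = (∮ z in C(c, R), f z) + ∮ z in C(c, R), g z := by
  simp only [circleIntegral, smul_add]
  exact intervalIntegral.integral_add hf.out hg.out

lemma part1 (a : ℂ) (m : ℕ) (b : ℕ → ℂ) (g f : ℂ → ℂ) (δ : ℝ)
    (hg : DifferentiableOn ℂ g (Metric.ball a δ))
    (hfg : ∀ z ∈ Metric.ball a δ, z ≠ a →
      f z = (∑ j ∈ Finset.range m, b j / (z - a)^(j+1)) + g z)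
    (ε : ℝ) (hε : 0 < ε) (hεδ : ε < δ) (n : ℕ) (hn : m ≤ n) :
    (1 / (2 * (π:ℂ) * Complex.I)) * (∮ t in C(a, ε), f t * t^n) =
      ∑ j ∈ Finset.range m, (n.choose j : ℂ) * a^(n-j) * b j := by
  have hsub : Metric.sphere a ε ⊆ Metric.ball a δ :=
    Metric.sphere_subset_closedBall.trans (Metric.closedBall_subset_ball hεδ)
  have hne : ∀ t ∈ Metric.sphere a ε, t - a ≠ 0 := fun t ht =>
    sub_ne_zero.2 (by intro h; subst h; rw [Metric.mem_sphere, dist_self] at ht; exact hε.ne ht)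
  -- rewrite the integrand on the sphere
  have key : Set.EqOn (fun t => f t * t ^ n)
      (fun t => (∑ j ∈ Finset.range m, b j * (t ^ n / (t - a) ^ (j + 1))) + g t * t ^ n)
      (Metric.sphere a ε) := by
    intro t ht
    have hta : t ≠ a := sub_ne_zero.1 (hne t ht)
    simp only
    rw [hfg t (hsub ht) hta, add_mul, Finset.sum_mul]
    congr 1
    exact Finset.sum_congr rfl fun j _ => by field_simp
  rw [circleIntegral.integral_congr hε.le key]
  -- integrability of each piece
  have hint : ∀ j ∈ Finset.range m,
      CircleIntegrable (fun t => b j * (t ^ n / (t - a) ^ (j + 1))) a ε := by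
    intro j _
    refine ContinuousOn.circleIntegrable hε.le ?_
    refine (continuousOn_const.mul ((continuousOn_pow n).div
      (((continuousOn_id).sub continuousOn_const).pow _) fun t ht => pow_ne_zero _ (hne t ht)))
  have hintg : CircleIntegrable (fun t => g t * t ^ n) a ε :=
    ContinuousOn.circleIntegrable hε.le
      (((hg.continuousOn.mono hsub).mul (continuousOn_pow n)))
  have hintsum : CircleIntegrable
      (fun t => ∑ j ∈ Finset.range m, b j * (t ^ n / (t - a) ^ (j + 1))) a ε := by
    refine ContinuousOn.circleIntegrable hε.le ?_
    refine continuousOn_finset_sum _ fun j _ => ?_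
    exact continuousOn_const.mul ((continuousOn_pow n).div
      (((continuousOn_id).sub continuousOn_const).pow _) fun t ht => pow_ne_zero _ (hne t ht))
  rw [circleIntegral_add' hintsum hintg]
  -- the g-part vanishes
  have hg0 : (∮ t in C(a, ε), g t * t ^ n) = 0 := by
    refine circleIntegral_eq_zero_of_differentiable_on_off_countable hε.le
      (Set.countable_empty) ?_ ?_
    · exact ((hg.continuousOn.mono ((Metric.closedBall_subset_ball hεδ))).mul
        (continuousOn_pow n))
    · intro z hz
      have hz' : z ∈ Metric.ball a δ := Metric.ball_subset_ball hεδ.le hz.1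
      exact ((hg.differentiableAt (Metric.isOpen_ball.mem_nhds hz')).mul
        (differentiableAt_pow n))
  rw [hg0, add_zero, circleIntegral_finset_sum _ _ _ _ hint]
  have hstep : ∀ j ∈ Finset.range m,
      (∮ t in C(a, ε), b j * (t ^ n / (t - a) ^ (j + 1)))
        = b j * (2 * (π:ℂ) * Complex.I * ((n.choose j : ℂ) * a ^ (n - j))) := by
    intro j hj
    rw [circleIntegral.integral_const_mul,
      circleIntegral_pow_div a hε (by have := Finset.mem_range.1 hj; omega : j ≤ n)]
  rw [Finset.sum_congr rfl hstep, Finset.mul_sum]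
  refine Finset.sum_congr rfl fun j _ => ?_
  have h2pi : (2 * (π:ℂ) * Complex.I) ≠ 0 := by
    simp [Real.pi_ne_zero, Complex.I_ne_zero]
  field_simp

lemma nat_choose_ratio {m n j : ℕ} (hm : 2 ≤ m) (hn : m ≤ n) (hj : j < m - 1) :
    n * n.choose j ≤ m ^ (2 * m) * n.choose (m - 1) := by
  have hn1 : 1 ≤ n := le_trans (by omega) hn
  have h1 : n * n.choose j ≤ n ^ (m - 1) := by
    calc n * n.choose j ≤ n * n ^ j :=
          Nat.mul_le_mul_left n ((Nat.choose_le_descFactorial n j).trans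
            (Nat.descFactorial_le_pow n j))
      _ = n ^ (j + 1) := by ring
      _ ≤ n ^ (m - 1) := Nat.pow_le_pow_right hn1 (by omega)
  have h2 : n ≤ m * (n + 1 - (m - 1)) := by
    have : n + 1 - (m - 1) = n - m + 2 := by omega
    rw [this]
    have hd : n = m + (n - m) := by omega
    nlinarith [Nat.one_le_iff_ne_zero.1 (le_trans (by omega) hm : 1 ≤ m), n - m,
      Nat.le_mul_of_pos_left (n - m) (show 0 < m by omega)]
  have h3 : (n + 1 - (m - 1)) ^ (m - 1) ≤ (m - 1).factorial * n.choose (m - 1) := by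
    rw [← Nat.descFactorial_eq_factorial_mul_choose]
    exact Nat.pow_sub_le_descFactorial n (m - 1)
  have h4 : (m - 1).factorial ≤ m ^ (m - 1) :=
    le_trans (Nat.factorial_le_pow (m - 1)) (Nat.pow_le_pow_left (by omega) _)
  calc n * n.choose j ≤ n ^ (m - 1) := h1
    _ ≤ (m * (n + 1 - (m - 1))) ^ (m - 1) := Nat.pow_le_pow_left h2 _
    _ = m ^ (m - 1) * (n + 1 - (m - 1)) ^ (m - 1) := mul_pow _ _ _
    _ ≤ m ^ (m - 1) * ((m - 1).factorial * n.choose (m - 1)) := Nat.mul_le_mul_left _ h3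
    _ ≤ m ^ (m - 1) * (m ^ (m - 1) * n.choose (m - 1)) :=
        Nat.mul_le_mul_left _ (Nat.mul_le_mul_right _ h4)
    _ = m ^ (2 * (m - 1)) * n.choose (m - 1) := by rw [two_mul, pow_add]; ring
    _ ≤ m ^ (2 * m) * n.choose (m - 1) :=
        Nat.mul_le_mul_right _ (Nat.pow_le_pow_right (by omega) (by omega))

lemma part2 (a : ℂ) (ha0 : 0 < ‖a‖) (ha1 : ‖a‖ < 1)
    (m : ℕ) (hm : 1 ≤ m) (b : ℕ → ℂ) (hb : b (m-1) ≠ 0) :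
    ∃ C₁ : ℝ, 0 < C₁ ∧ ∀ n : ℕ, m ≤ n → ∃ h : ℂ,
      (∑ j ∈ Finset.range m, (n.choose j : ℂ) * a^(n-j) * b j) =
        b (m-1) * a^(n-m+1) * (n.choose (m-1) : ℂ) * (1 + h) ∧
      (m = 1 → h = 0) ∧
      (2 ≤ m → ‖h‖ ≤ C₁ / n *
        ((((Finset.range (m-1)).sup fun j => ‖b j‖₊) : NNReal) : ℝ) /
          ‖b (m-1)‖) := by
  have hm0 : m ≠ 0 := by omega
  refine ⟨(m:ℝ)^(2*m+1), by positivity, fun n hn => ?_⟩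
  have ha : a ≠ 0 := by simpa using ha0.ne'
  have hnm : n - (m-1) = n - m + 1 := by omega
  set T : ℂ := ∑ j ∈ Finset.range (m-1), (n.choose j : ℂ) * a^(n-j) * b j with hT
  set D : ℂ := b (m-1) * a^(n-m+1) * (n.choose (m-1) : ℂ) with hD
  have hchoose : (0:ℝ) < (n.choose (m-1) : ℝ) := by
    exact_mod_cast Nat.choose_pos (by omega : m - 1 ≤ n)
  have hD0 : D ≠ 0 := by
    refine mul_ne_zero (mul_ne_zero hb (pow_ne_zero _ ha)) ?_
    exact_mod_cast hchoose.ne'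
  have hsplit : (∑ j ∈ Finset.range m, (n.choose j : ℂ) * a^(n-j) * b j) = T + D := by
    have hm' : m = (m - 1) + 1 := by omega
    rw [hm', Finset.sum_range_succ]
    rw [hnm, ← hT, hD]
    ring
  refine ⟨T / D, ?_, ?_, ?_⟩
  · rw [hsplit, mul_add, mul_one, mul_div_cancel₀ _ hD0]; ring
  · intro h1
    subst h1
    simp [hT]
  · intro hm2
    set B : ℝ := ((((Finset.range (m-1)).sup fun j => ‖b j‖₊) : NNReal) : ℝ) with hBdef
    have hBnn : 0 ≤ B := NNReal.coe_nonneg _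
    have hBle : ∀ j ∈ Finset.range (m-1), ‖b j‖ ≤ B := by
      intro j hj
      have := Finset.le_sup (f := fun j => ‖b j‖₊) hj
      calc ‖b j‖ = ((‖b j‖₊ : NNReal) : ℝ) := by
            simp [coe_nnnorm]
        _ ≤ B := by exact_mod_cast this
    set K : ℕ := ∑ j ∈ Finset.range (m-1), n.choose j with hK
    set Ap : ℝ := (‖a‖) ^ (n - m + 1) with hAp
    have hAppos : 0 < Ap := by positivity
    have hTb : ‖T‖ ≤ (K:ℝ) * Ap * B := by
      calc ‖T‖ ≤ ∑ j ∈ Finset.range (m-1),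
            ‖(n.choose j : ℂ) * a^(n-j) * b j‖ := by
            exact norm_sum_le _ _
        _ ≤ ∑ j ∈ Finset.range (m-1), (n.choose j : ℝ) * (Ap * B) := by
            refine Finset.sum_le_sum fun j hj => ?_
            have hj' : j < m - 1 := Finset.mem_range.1 hj
            rw [norm_mul, norm_mul, Complex.norm_natCast, norm_pow]
            rw [mul_assoc]
            refine mul_le_mul_of_nonneg_left ?_ (by positivity)
            refine mul_le_mul ?_ (hBle j hj) (norm_nonneg _) hAppos.le
            exact pow_le_pow_of_le_one (norm_nonneg a) ha1.le (by omega)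
        _ = (K:ℝ) * Ap * B := by
            rw [← Finset.sum_mul, hK]
            push_cast
            ring
    have hKn : (K:ℝ) * n ≤ (m:ℝ)^(2*m+1) * (n.choose (m-1) : ℝ) := by
      have hnat : K * n ≤ m^(2*m+1) * n.choose (m-1) := by
        calc K * n = ∑ j ∈ Finset.range (m-1), n.choose j * n := by rw [hK, Finset.sum_mul]
          _ ≤ ∑ _j ∈ Finset.range (m-1), m^(2*m) * n.choose (m-1) := by
              refine Finset.sum_le_sum fun j hj => ?_
              rw [mul_comm]
              exact nat_choose_ratio hm2 hn (Finset.mem_range.1 hj)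
          _ = (m-1) * (m^(2*m) * n.choose (m-1)) := by
              rw [Finset.sum_const, Finset.card_range, smul_eq_mul]
          _ ≤ m * (m^(2*m) * n.choose (m-1)) :=
              Nat.mul_le_mul_right _ (by omega)
          _ = m^(2*m+1) * n.choose (m-1) := by ring
      exact_mod_cast hnat
    have habD : ‖D‖ = ‖b (m-1)‖ * Ap * (n.choose (m-1) : ℝ) := by
      rw [hD, norm_mul, norm_mul, norm_pow, Complex.norm_natCast, hAp]
    have hbpos : 0 < ‖b (m-1)‖ := by
      simpa [norm_pos_iff] using hb
    have hnpos : (0:ℝ) < n := by exact_mod_cast (by omega : 0 < n)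
    have hDpos : 0 < ‖D‖ := by rw [habD]; positivity
    rw [norm_div]
    calc ‖T‖ / ‖D‖ ≤ ((K:ℝ) * Ap * B) / ‖D‖ :=
          div_le_div_of_nonneg_right hTb hDpos.le
      _ ≤ (m:ℝ)^(2*m+1) / n * B / ‖b (m-1)‖ := by
          rw [habD]
          have hr : (m:ℝ)^(2*m+1) / n * B / ‖b (m-1)‖
              = ((m:ℝ)^(2*m+1) * B) / (n * ‖b (m-1)‖) := by ring
          rw [hr, div_le_div_iff₀ (by positivity) (by positivity)]
          nlinarith [mul_le_mul_of_nonneg_right hKn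
            (show (0:ℝ) ≤ Ap * B * ‖b (m-1)‖ by positivity)]

/-- Residue formula at a pole of order `m`:
`res_{t=a} (f(t) tⁿ) = ∑_{j<m} C(n,j) a^{n-j} f_{-j-1}
 = f_{-m} a^{n-m+1} C(n,m-1) (1 + hₙ)` with `hₙ = O(1/n)`. -/
theorem residue_pole_formula
    (a : ℂ) (ha0 : 0 < ‖a‖) (ha1 : ‖a‖ < 1)
    (m : ℕ) (hm : 1 ≤ m) (b : ℕ → ℂ) (hb : b (m-1) ≠ 0)
    (g f : ℂ → ℂ) (δ : ℝ) (hδ : 0 < δ)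
    (hg : DifferentiableOn ℂ g (Metric.ball a δ))
    (hfg : ∀ z ∈ Metric.ball a δ, z ≠ a →
      f z = (∑ j ∈ Finset.range m, b j / (z - a)^(j+1)) + g z) :
    (∀ ε : ℝ, 0 < ε → ε < δ → ∀ n : ℕ, m ≤ n →
      (1 / (2 * (π:ℂ) * Complex.I)) * (∮ t in C(a, ε), f t * t^n) =
        ∑ j ∈ Finset.range m, (n.choose j : ℂ) * a^(n-j) * b j) ∧
    ∃ C₁ : ℝ, 0 < C₁ ∧ ∀ n : ℕ, m ≤ n → ∃ h : ℂ,
      (∑ j ∈ Finset.range m, (n.choose j : ℂ) * a^(n-j) * b j) =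
        b (m-1) * a^(n-m+1) * (n.choose (m-1) : ℂ) * (1 + h) ∧
      (m = 1 → h = 0) ∧
      (2 ≤ m → ‖h‖ ≤ C₁ / n *
        ((((Finset.range (m-1)).sup fun j => ‖b j‖₊) : NNReal) : ℝ) /
          ‖b (m-1)‖) := by
  exact ⟨fun ε hε hεδ n hn => part1 a m b g f δ hg hfg ε hε hεδ n hn,
    part2 a ha0 ha1 m hm b hb⟩
end
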